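/- Let G₁ and G₂ be finite connected simple graphs on disjoint vertex sets V₁ and V₂, let v₁ ∈ V₁ and v₂ ∈ V₂, and let G be the graph on V₁ ∪ V₂ whose edges are those of G₁, those of G₂, together with the single edge (v₁, v₂). Then |∂G| ≥ max{|∂G₁|, |∂G₂|}. -/

import Mathlib

open Finset

variable {V : Type*}

/-- The Steinerberger boundary of a graph. -/
def sBoundary (G : SimpleGraph V) [Fintype V] [DecidableRel G.Adj] : Set V :=
  if Fintype.card V = 1 then Set.univ
  else {v | ∃ u : V, ∑ w ∈ G.neighborFinset v, G.dist w u < G.degree v * G.dist v u}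

/-- The graph on `V₁ ⊕ V₂` obtained from the disjoint union of `G₁` and `G₂` by adding the
single edge between `v₁` and `v₂`. -/
def joinGraph {V₁ V₂ : Type*} (G₁ : SimpleGraph V₁) (G₂ : SimpleGraph V₂) (v₁ : V₁)
    (v₂ : V₂) : SimpleGraph (V₁ ⊕ V₂) where
  Adj x y :=
    (∃ a b, x = Sum.inl a ∧ y = Sum.inl b ∧ G₁.Adj a b) ∨
    (∃ a b, x = Sum.inr a ∧ y = Sum.inr b ∧ G₂.Adj a b) ∨
    (x = Sum.inl v₁ ∧ y = Sum.inr v₂) ∨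
    (x = Sum.inr v₂ ∧ y = Sum.inl v₁)
  symm := by
    constructor
    rintro x y (⟨a, b, rfl, rfl, h⟩ | ⟨a, b, rfl, rfl, h⟩ | ⟨rfl, rfl⟩ | ⟨rfl, rfl⟩)
    · exact Or.inl ⟨b, a, rfl, rfl, h.symm⟩
    · exact Or.inr (Or.inl ⟨b, a, rfl, rfl, h.symm⟩)
    · exact Or.inr (Or.inr (Or.inr ⟨rfl, rfl⟩))
    · exact Or.inr (Or.inr (Or.inl ⟨rfl, rfl⟩))
  loopless := by
    constructor
    rintro x (⟨a, b, h1, h2, h⟩ | ⟨a, b, h1, h2, h⟩ | ⟨h1, h2⟩ | ⟨h1, h2⟩)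
    · subst h1; injection h2 with h2; subst h2; exact G₁.irrefl h
    · subst h1; injection h2 with h2; subst h2; exact G₂.irrefl h
    · subst h1; simp at h2
    · subst h1; simp at h2

noncomputable instance {V₁ V₂ : Type*} {G₁ : SimpleGraph V₁} {G₂ : SimpleGraph V₂}
    {v₁ : V₁} {v₂ : V₂} : DecidableRel (joinGraph G₁ G₂ v₁ v₂).Adj :=
  Classical.decRel _

set_option linter.unusedSectionVars false

namespace SBJoinAux

open SimpleGraph

variable {V₁ V₂ : Type*} (G₁ : SimpleGraph V₁) (G₂ : SimpleGraph V₂) (v₁ : V₁) (v₂ : V₂)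

/-- inclusion hom on the left. -/
def hom₁ : G₁ →g joinGraph G₁ G₂ v₁ v₂ where
  toFun := Sum.inl
  map_rel' := fun h => Or.inl ⟨_, _, rfl, rfl, h⟩

/-- inclusion hom on the right. -/
def hom₂ : G₂ →g joinGraph G₁ G₂ v₁ v₂ where
  toFun := Sum.inr
  map_rel' := fun h => Or.inr (Or.inl ⟨_, _, rfl, rfl, h⟩)

variable {G₁ G₂ v₁ v₂}

lemma proj₁ {x y : V₁ ⊕ V₂} (p : (joinGraph G₁ G₂ v₁ v₂).Walk x y) :
    ∃ q : G₁.Walk (Sum.elim id (fun _ => v₁) x) (Sum.elim id (fun _ => v₁) y),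
      q.length ≤ p.length := by
  induction p with
  | nil => exact ⟨SimpleGraph.Walk.nil, le_rfl⟩
  | @cons x z y h p ih =>
    obtain ⟨q, hq⟩ := ih
    rcases h with ⟨a, b, rfl, rfl, hab⟩ | ⟨a, b, rfl, rfl, hab⟩ | ⟨rfl, rfl⟩ | ⟨rfl, rfl⟩
    · exact ⟨q.cons hab, Nat.succ_le_succ hq⟩
    · exact ⟨q, hq.trans (Nat.le_succ _)⟩
    · exact ⟨q, hq.trans (Nat.le_succ _)⟩
    · exact ⟨q, hq.trans (Nat.le_succ _)⟩

lemma proj₂ {x y : V₁ ⊕ V₂} (p : (joinGraph G₁ G₂ v₁ v₂).Walk x y) :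
    ∃ q : G₂.Walk (Sum.elim (fun _ => v₂) id x) (Sum.elim (fun _ => v₂) id y),
      q.length ≤ p.length := by
  induction p with
  | nil => exact ⟨SimpleGraph.Walk.nil, le_rfl⟩
  | @cons x z y h p ih =>
    obtain ⟨q, hq⟩ := ih
    rcases h with ⟨a, b, rfl, rfl, hab⟩ | ⟨a, b, rfl, rfl, hab⟩ | ⟨rfl, rfl⟩ | ⟨rfl, rfl⟩
    · exact ⟨q, hq.trans (Nat.le_succ _)⟩
    · exact ⟨q.cons hab, Nat.succ_le_succ hq⟩
    · exact ⟨q, hq.trans (Nat.le_succ _)⟩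
    · exact ⟨q, hq.trans (Nat.le_succ _)⟩

lemma join_connected (hc₁ : G₁.Connected) (hc₂ : G₂.Connected) :
    (joinGraph G₁ G₂ v₁ v₂).Connected := by
  rw [connected_iff]
  refine ⟨?_, ⟨Sum.inl v₁⟩⟩
  have key : ∀ z, (joinGraph G₁ G₂ v₁ v₂).Reachable (Sum.inl v₁) z := by
    rintro (a | b)
    · exact Reachable.map (hom₁ G₁ G₂ v₁ v₂) (hc₁.preconnected v₁ a)
    · have h1 : (joinGraph G₁ G₂ v₁ v₂).Adj (Sum.inl v₁) (Sum.inr v₂) :=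
        Or.inr (Or.inr (Or.inl ⟨rfl, rfl⟩))
      exact h1.reachable.trans (Reachable.map (hom₂ G₁ G₂ v₁ v₂) (hc₂.preconnected v₂ b))
  exact fun x y => (key x).symm.trans (key y)

lemma dist_inl (hc₁ : G₁.Connected) (hc₂ : G₂.Connected) (a b : V₁) :
    (joinGraph G₁ G₂ v₁ v₂).dist (Sum.inl a) (Sum.inl b) = G₁.dist a b := by
  apply le_antisymm
  · obtain ⟨p, hp⟩ := hc₁.exists_walk_length_eq_dist a b
    calc (joinGraph G₁ G₂ v₁ v₂).dist (Sum.inl a) (Sum.inl b)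
        ≤ (p.map (hom₁ G₁ G₂ v₁ v₂)).length := SimpleGraph.dist_le _
      _ = G₁.dist a b := by rw [SimpleGraph.Walk.length_map, hp]
  · obtain ⟨p, hp⟩ := (join_connected hc₁ hc₂).exists_walk_length_eq_dist
      (Sum.inl a) (Sum.inl b)
    obtain ⟨q, hq⟩ := proj₁ p
    calc G₁.dist a b ≤ q.length := SimpleGraph.dist_le q
      _ ≤ p.length := hq
      _ = _ := hp

lemma dist_inr (hc₁ : G₁.Connected) (hc₂ : G₂.Connected) (a b : V₂) :
    (joinGraph G₁ G₂ v₁ v₂).dist (Sum.inr a) (Sum.inr b) = G₂.dist a b := by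
  apply le_antisymm
  · obtain ⟨p, hp⟩ := hc₂.exists_walk_length_eq_dist a b
    calc (joinGraph G₁ G₂ v₁ v₂).dist (Sum.inr a) (Sum.inr b)
        ≤ (p.map (hom₂ G₁ G₂ v₁ v₂)).length := SimpleGraph.dist_le _
      _ = G₂.dist a b := by rw [SimpleGraph.Walk.length_map, hp]
  · obtain ⟨p, hp⟩ := (join_connected hc₁ hc₂).exists_walk_length_eq_dist
      (Sum.inr a) (Sum.inr b)
    obtain ⟨q, hq⟩ := proj₂ p
    calc G₂.dist a b ≤ q.length := SimpleGraph.dist_le q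
      _ ≤ p.length := hq
      _ = _ := hp

variable [Fintype V₁] [Fintype V₂] [DecidableRel G₁.Adj] [DecidableRel G₂.Adj]

lemma nbhd_inl {v : V₁} (hv : v ≠ v₁) :
    (joinGraph G₁ G₂ v₁ v₂).neighborFinset (Sum.inl v)
      = (G₁.neighborFinset v).map ⟨Sum.inl, Sum.inl_injective⟩ := by
  ext x
  simp only [mem_neighborFinset, Finset.mem_map, Function.Embedding.coeFn_mk]
  constructor
  · rintro (⟨a, b, ha, rfl, hab⟩ | ⟨a, b, ha, hb, hab⟩ | ⟨h1, rfl⟩ | ⟨h1, h2⟩)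
    · injection ha with ha; subst ha; exact ⟨b, hab, rfl⟩
    · exact absurd ha (by simp)
    · injection h1 with h1; exact absurd h1 hv
    · exact absurd h1 (by simp)
  · rintro ⟨b, hb, rfl⟩; exact Or.inl ⟨v, b, rfl, rfl, hb⟩

lemma nbhd_inr {v : V₂} (hv : v ≠ v₂) :
    (joinGraph G₁ G₂ v₁ v₂).neighborFinset (Sum.inr v)
      = (G₂.neighborFinset v).map ⟨Sum.inr, Sum.inr_injective⟩ := by
  ext x
  simp only [mem_neighborFinset, Finset.mem_map, Function.Embedding.coeFn_mk]
  constructor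
  · rintro (⟨a, b, ha, hb, hab⟩ | ⟨a, b, ha, rfl, hab⟩ | ⟨h1, h2⟩ | ⟨h1, rfl⟩)
    · exact absurd ha (by simp)
    · injection ha with ha; subst ha; exact ⟨b, hab, rfl⟩
    · exact absurd h1 (by simp)
    · injection h1 with h1; exact absurd h1 hv
  · rintro ⟨b, hb, rfl⟩; exact Or.inr (Or.inl ⟨v, b, rfl, rfl, hb⟩)

lemma card_sum_ne_one (x₁ : V₁) (x₂ : V₂) : Fintype.card (V₁ ⊕ V₂) ≠ 1 := by
  have h1 : 0 < Fintype.card V₁ := Fintype.card_pos_iff.mpr ⟨x₁⟩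
  have h2 : 0 < Fintype.card V₂ := Fintype.card_pos_iff.mpr ⟨x₂⟩
  rw [Fintype.card_sum]
  omega

lemma mem_boundary_inl (hc₁ : G₁.Connected) (hc₂ : G₂.Connected) {v : V₁}
    (hv : v ∈ sBoundary G₁) (hne : v ≠ v₁) :
    Sum.inl v ∈ sBoundary (joinGraph G₁ G₂ v₁ v₂) := by
  rw [sBoundary, if_neg (card_sum_ne_one v₁ v₂)]
  have hV₁ : Fintype.card V₁ ≠ 1 := by
    intro h
    obtain ⟨x, hx⟩ := Fintype.card_eq_one_iff.mp h
    exact hne ((hx v).trans (hx v₁).symm)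
  rw [sBoundary, if_neg hV₁] at hv
  obtain ⟨u, hu⟩ := hv
  refine ⟨Sum.inl u, ?_⟩
  have hsum : ∑ w ∈ (joinGraph G₁ G₂ v₁ v₂).neighborFinset (Sum.inl v),
      (joinGraph G₁ G₂ v₁ v₂).dist w (Sum.inl u)
      = ∑ w ∈ G₁.neighborFinset v, G₁.dist w u := by
    rw [nbhd_inl hne, Finset.sum_map]
    exact Finset.sum_congr rfl fun w _ => dist_inl hc₁ hc₂ w u
  have hdeg : (joinGraph G₁ G₂ v₁ v₂).degree (Sum.inl v) = G₁.degree v := by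
    rw [SimpleGraph.degree, nbhd_inl hne, Finset.card_map, SimpleGraph.degree]
  show ∑ w ∈ (joinGraph G₁ G₂ v₁ v₂).neighborFinset (Sum.inl v),
      (joinGraph G₁ G₂ v₁ v₂).dist w (Sum.inl u) < _
  rw [hsum, hdeg, dist_inl hc₁ hc₂ v u]
  exact hu

lemma mem_boundary_inr (hc₁ : G₁.Connected) (hc₂ : G₂.Connected) {v : V₂}
    (hv : v ∈ sBoundary G₂) (hne : v ≠ v₂) :
    Sum.inr v ∈ sBoundary (joinGraph G₁ G₂ v₁ v₂) := by
  rw [sBoundary, if_neg (card_sum_ne_one v₁ v₂)]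
  have hV₂ : Fintype.card V₂ ≠ 1 := by
    intro h
    obtain ⟨x, hx⟩ := Fintype.card_eq_one_iff.mp h
    exact hne ((hx v).trans (hx v₂).symm)
  rw [sBoundary, if_neg hV₂] at hv
  obtain ⟨u, hu⟩ := hv
  refine ⟨Sum.inr u, ?_⟩
  have hsum : ∑ w ∈ (joinGraph G₁ G₂ v₁ v₂).neighborFinset (Sum.inr v),
      (joinGraph G₁ G₂ v₁ v₂).dist w (Sum.inr u)
      = ∑ w ∈ G₂.neighborFinset v, G₂.dist w u := by
    rw [nbhd_inr hne, Finset.sum_map]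
    exact Finset.sum_congr rfl fun w _ => dist_inr hc₁ hc₂ w u
  have hdeg : (joinGraph G₁ G₂ v₁ v₂).degree (Sum.inr v) = G₂.degree v := by
    rw [SimpleGraph.degree, nbhd_inr hne, Finset.card_map, SimpleGraph.degree]
  show ∑ w ∈ (joinGraph G₁ G₂ v₁ v₂).neighborFinset (Sum.inr v),
      (joinGraph G₁ G₂ v₁ v₂).dist w (Sum.inr u) < _
  rw [hsum, hdeg, dist_inr hc₁ hc₂ v u]
  exact hu

lemma exists_boundary_inr (hc₁ : G₁.Connected) (hc₂ : G₂.Connected) :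
    ∃ m : V₂, Sum.inr m ∈ sBoundary (joinGraph G₁ G₂ v₁ v₂) := by
  classical
  have hconn := join_connected (v₁ := v₁) (v₂ := v₂) hc₁ hc₂
  obtain ⟨m, -, hm⟩ := Finset.exists_max_image Finset.univ
    (fun b : V₂ => (joinGraph G₁ G₂ v₁ v₂).dist (Sum.inr b) (Sum.inl v₁)) ⟨v₂, mem_univ _⟩
  refine ⟨m, ?_⟩
  rw [sBoundary, if_neg (card_sum_ne_one v₁ v₂)]
  refine ⟨Sum.inl v₁, ?_⟩
  set D := (joinGraph G₁ G₂ v₁ v₂).dist (Sum.inr m) (Sum.inl v₁) with hD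
  have hDpos : 0 < D := hconn.pos_dist_of_ne (by simp)
  have hstrict : ∃ w₀ ∈ (joinGraph G₁ G₂ v₁ v₂).neighborFinset (Sum.inr m),
      (joinGraph G₁ G₂ v₁ v₂).dist w₀ (Sum.inl v₁) < D := by
    obtain ⟨p, hp⟩ := hconn.exists_walk_length_eq_dist (Sum.inr m) (Sum.inl v₁)
    cases p with
    | @cons _ z _ h q =>
      refine ⟨z, (SimpleGraph.mem_neighborFinset _ _ _).2 h, ?_⟩
      have h1 := SimpleGraph.dist_le q
      rw [SimpleGraph.Walk.length_cons] at hp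
      omega
  have hub : ∀ w ∈ (joinGraph G₁ G₂ v₁ v₂).neighborFinset (Sum.inr m),
      (joinGraph G₁ G₂ v₁ v₂).dist w (Sum.inl v₁) ≤ D := by
    intro w hw
    rw [SimpleGraph.mem_neighborFinset] at hw
    rcases hw with ⟨a, b, ha, hb, hab⟩ | ⟨a, b, ha, rfl, hab⟩ | ⟨ha, hb⟩ | ⟨ha, rfl⟩
    · exact absurd ha (by simp)
    · exact hm b (mem_univ b)
    · exact absurd ha (by simp)
    · simp [SimpleGraph.dist_self]
  calc ∑ w ∈ (joinGraph G₁ G₂ v₁ v₂).neighborFinset (Sum.inr m),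
        (joinGraph G₁ G₂ v₁ v₂).dist w (Sum.inl v₁)
      < ∑ _w ∈ (joinGraph G₁ G₂ v₁ v₂).neighborFinset (Sum.inr m), D :=
        Finset.sum_lt_sum hub hstrict
    _ = (joinGraph G₁ G₂ v₁ v₂).degree (Sum.inr m) * D := by
        rw [Finset.sum_const, smul_eq_mul]; rfl

lemma exists_boundary_inl (hc₁ : G₁.Connected) (hc₂ : G₂.Connected) :
    ∃ m : V₁, Sum.inl m ∈ sBoundary (joinGraph G₁ G₂ v₁ v₂) := by
  classical
  have hconn := join_connected (v₁ := v₁) (v₂ := v₂) hc₁ hc₂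
  obtain ⟨m, -, hm⟩ := Finset.exists_max_image Finset.univ
    (fun b : V₁ => (joinGraph G₁ G₂ v₁ v₂).dist (Sum.inl b) (Sum.inr v₂)) ⟨v₁, mem_univ _⟩
  refine ⟨m, ?_⟩
  rw [sBoundary, if_neg (card_sum_ne_one v₁ v₂)]
  refine ⟨Sum.inr v₂, ?_⟩
  set D := (joinGraph G₁ G₂ v₁ v₂).dist (Sum.inl m) (Sum.inr v₂) with hD
  have hDpos : 0 < D := hconn.pos_dist_of_ne (by simp)
  have hstrict : ∃ w₀ ∈ (joinGraph G₁ G₂ v₁ v₂).neighborFinset (Sum.inl m),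
      (joinGraph G₁ G₂ v₁ v₂).dist w₀ (Sum.inr v₂) < D := by
    obtain ⟨p, hp⟩ := hconn.exists_walk_length_eq_dist (Sum.inl m) (Sum.inr v₂)
    cases p with
    | @cons _ z _ h q =>
      refine ⟨z, (SimpleGraph.mem_neighborFinset _ _ _).2 h, ?_⟩
      have h1 := SimpleGraph.dist_le q
      rw [SimpleGraph.Walk.length_cons] at hp
      omega
  have hub : ∀ w ∈ (joinGraph G₁ G₂ v₁ v₂).neighborFinset (Sum.inl m),
      (joinGraph G₁ G₂ v₁ v₂).dist w (Sum.inr v₂) ≤ D := by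
    intro w hw
    rw [SimpleGraph.mem_neighborFinset] at hw
    rcases hw with ⟨a, b, ha, rfl, hab⟩ | ⟨a, b, ha, hb, hab⟩ | ⟨ha, rfl⟩ | ⟨ha, hb⟩
    · exact hm b (mem_univ b)
    · exact absurd ha (by simp)
    · simp [SimpleGraph.dist_self]
    · exact absurd ha (by simp)
  calc ∑ w ∈ (joinGraph G₁ G₂ v₁ v₂).neighborFinset (Sum.inl m),
        (joinGraph G₁ G₂ v₁ v₂).dist w (Sum.inr v₂)
      < ∑ _w ∈ (joinGraph G₁ G₂ v₁ v₂).neighborFinset (Sum.inl m), D :=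
        Finset.sum_lt_sum hub hstrict
    _ = (joinGraph G₁ G₂ v₁ v₂).degree (Sum.inl m) * D := by
        rw [Finset.sum_const, smul_eq_mul]; rfl

lemma side₁ (hc₁ : G₁.Connected) (hc₂ : G₂.Connected) :
    (sBoundary G₁).ncard ≤ (sBoundary (joinGraph G₁ G₂ v₁ v₂)).ncard := by
  obtain ⟨m, hm⟩ := exists_boundary_inr (v₁ := v₁) hc₁ hc₂
  have hsub : (Sum.inl '' (sBoundary G₁ \ {v₁}) ∪ {Sum.inr m} : Set (V₁ ⊕ V₂))
      ⊆ sBoundary (joinGraph G₁ G₂ v₁ v₂) := by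
    rintro x (⟨v, ⟨hv, hvne⟩, rfl⟩ | rfl)
    · exact mem_boundary_inl hc₁ hc₂ hv hvne
    · exact hm
  have hdisj : Disjoint (Sum.inl '' (sBoundary G₁ \ {v₁}) : Set (V₁ ⊕ V₂)) {Sum.inr m} := by
    rw [Set.disjoint_singleton_right]
    rintro ⟨v, -, h⟩
    exact Sum.inl_ne_inr h
  calc (sBoundary G₁).ncard
      ≤ ((sBoundary G₁ \ {v₁}) ∪ {v₁}).ncard := by
        apply Set.ncard_le_ncard _ (Set.toFinite _)
        intro x hx
        by_cases h : x = v₁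
        · exact Or.inr h
        · exact Or.inl ⟨hx, h⟩
    _ ≤ (sBoundary G₁ \ {v₁}).ncard + ({v₁} : Set V₁).ncard := Set.ncard_union_le _ _
    _ = (Sum.inl '' (sBoundary G₁ \ {v₁}) : Set (V₁ ⊕ V₂)).ncard
          + ({Sum.inr m} : Set (V₁ ⊕ V₂)).ncard := by
        rw [Set.ncard_image_of_injective _ Sum.inl_injective, Set.ncard_singleton,
          Set.ncard_singleton]
    _ = ((Sum.inl '' (sBoundary G₁ \ {v₁}) ∪ {Sum.inr m} : Set (V₁ ⊕ V₂))).ncard :=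
        (Set.ncard_union_eq hdisj (Set.toFinite _) (Set.toFinite _)).symm
    _ ≤ (sBoundary (joinGraph G₁ G₂ v₁ v₂)).ncard :=
        Set.ncard_le_ncard hsub (Set.toFinite _)

lemma side₂ (hc₁ : G₁.Connected) (hc₂ : G₂.Connected) :
    (sBoundary G₂).ncard ≤ (sBoundary (joinGraph G₁ G₂ v₁ v₂)).ncard := by
  obtain ⟨m, hm⟩ := exists_boundary_inl (v₂ := v₂) hc₁ hc₂
  have hsub : (Sum.inr '' (sBoundary G₂ \ {v₂}) ∪ {Sum.inl m} : Set (V₁ ⊕ V₂))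
      ⊆ sBoundary (joinGraph G₁ G₂ v₁ v₂) := by
    rintro x (⟨v, ⟨hv, hvne⟩, rfl⟩ | rfl)
    · exact mem_boundary_inr hc₁ hc₂ hv hvne
    · exact hm
  have hdisj : Disjoint (Sum.inr '' (sBoundary G₂ \ {v₂}) : Set (V₁ ⊕ V₂)) {Sum.inl m} := by
    rw [Set.disjoint_singleton_right]
    rintro ⟨v, -, h⟩
    exact Sum.inr_ne_inl h
  calc (sBoundary G₂).ncard
      ≤ ((sBoundary G₂ \ {v₂}) ∪ {v₂}).ncard := by
        apply Set.ncard_le_ncard _ (Set.toFinite _)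
        intro x hx
        by_cases h : x = v₂
        · exact Or.inr h
        · exact Or.inl ⟨hx, h⟩
    _ ≤ (sBoundary G₂ \ {v₂}).ncard + ({v₂} : Set V₂).ncard := Set.ncard_union_le _ _
    _ = (Sum.inr '' (sBoundary G₂ \ {v₂}) : Set (V₁ ⊕ V₂)).ncard
          + ({Sum.inl m} : Set (V₁ ⊕ V₂)).ncard := by
        rw [Set.ncard_image_of_injective _ Sum.inr_injective, Set.ncard_singleton,
          Set.ncard_singleton]
    _ = ((Sum.inr '' (sBoundary G₂ \ {v₂}) ∪ {Sum.inl m} : Set (V₁ ⊕ V₂))).ncard :=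
        (Set.ncard_union_eq hdisj (Set.toFinite _) (Set.toFinite _)).symm
    _ ≤ (sBoundary (joinGraph G₁ G₂ v₁ v₂)).ncard :=
        Set.ncard_le_ncard hsub (Set.toFinite _)

end SBJoinAux

theorem sBoundary_joinGraph_card_ge {V₁ V₂ : Type*} [Fintype V₁] [Fintype V₂]
    (G₁ : SimpleGraph V₁) (G₂ : SimpleGraph V₂) [DecidableRel G₁.Adj] [DecidableRel G₂.Adj]
    (hc₁ : G₁.Connected) (hc₂ : G₂.Connected) (v₁ : V₁) (v₂ : V₂) :
    max (sBoundary G₁).ncard (sBoundary G₂).ncard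
      ≤ (sBoundary (joinGraph G₁ G₂ v₁ v₂)).ncard :=
  max_le (SBJoinAux.side₁ hc₁ hc₂) (SBJoinAux.side₂ hc₁ hc₂)
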